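/- The set of f ∈ L¹([0,1]) that are nowhere essentially bounded is comeager (residual) in L¹([0,1]). -/

import Mathlib

open MeasureTheory Set Filter Topology ENNReal
set_option maxHeartbeats 1000000
set_option synthInstance.maxHeartbeats 400000

/-- Lebesgue measure on `[0,1]`. -/
noncomputable def muI : MeasureTheory.Measure ℝ :=
  MeasureTheory.volume.restrict (Set.Icc 0 1)

/-- `f` is nowhere essentially bounded: on no subinterval `[a,b]` of `[0,1]`
is `|f|` bounded by a constant almost everywhere. -/
def NowhereEssBdd (f : ℝ → ℝ) : Prop :=
  ∀ a b : ℝ, 0 ≤ a → a < b → b ≤ 1 →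
    ¬ ∃ C : ℝ, ∀ᵐ x ∂(MeasureTheory.volume.restrict (Set.Icc a b)), |f x| ≤ C

noncomputable def SB (a b : ℝ) (n : ℕ) : Set (MeasureTheory.Lp ℝ 1 muI) :=
  {f | ∀ᵐ x ∂(MeasureTheory.volume.restrict (Set.Icc a b)), |(f : ℝ → ℝ) x| ≤ n}

lemma nu_le_muI {a b : ℝ} (h : Set.Icc a b ⊆ Set.Icc 0 1) :
    MeasureTheory.volume.restrict (Set.Icc a b) ≤ muI :=
  Measure.restrict_mono h le_rfl

lemma SB_closed {a b : ℝ} (h : Set.Icc a b ⊆ Set.Icc 0 1) (n : ℕ) :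
    IsClosed (SB a b n) := by
  refine IsSeqClosed.isClosed ?_
  intro F f hF hlim
  have hmeas : TendstoInMeasure muI (fun k => (F k : ℝ → ℝ)) atTop f :=
    tendstoInMeasure_of_tendsto_Lp hlim
  obtain ⟨ns, -, hae⟩ := hmeas.exists_seq_tendsto_ae
  have hae' : ∀ᵐ x ∂(MeasureTheory.volume.restrict (Set.Icc a b)),
      Tendsto (fun i => (F (ns i) : ℝ → ℝ) x) atTop (𝓝 ((f : ℝ → ℝ) x)) :=
    ae_mono (nu_le_muI h) hae
  have hball : ∀ᵐ x ∂(MeasureTheory.volume.restrict (Set.Icc a b)),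
      ∀ k, |(F (ns k) : ℝ → ℝ) x| ≤ n := ae_all_iff.2 fun k => hF (ns k)
  filter_upwards [hae', hball] with x hx hbx
  exact le_of_tendsto hx.abs (Filter.Eventually.of_forall hbx)

lemma SB_interior {a b : ℝ} (ha : 0 ≤ a) (hlt : a < b) (hb : b ≤ 1) (n : ℕ) :
    interior (SB a b n) = ∅ := by
  by_contra hne
  obtain ⟨f, hf⟩ := Set.nonempty_iff_ne_empty.2 hne
  rw [mem_interior_iff_mem_nhds, Metric.mem_nhds_iff] at hf
  obtain ⟨ε, εpos, hball⟩ := hf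
  have hfS : f ∈ SB a b n := hball (Metric.mem_ball_self εpos)
  set c : ℝ := 2 * n + 1 with hc
  have hcpos : (0:ℝ) < c := by positivity
  set δ : ℝ := min ((b - a) / 2) (ε / (2 * c)) with hδ
  have hδpos : 0 < δ := lt_min (by linarith) (by positivity)
  have hδb : a + δ ≤ b := by
    have : δ ≤ (b - a) / 2 := min_le_left _ _
    linarith
  have hssub : Set.Ioc a (a + δ) ⊆ Set.Icc a b := fun x hx => ⟨le_of_lt hx.1, hx.2.trans hδb⟩
  have hssub01 : Set.Ioc a (a + δ) ⊆ Set.Icc 0 1 :=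
    hssub.trans (fun x hx => ⟨ha.trans hx.1, hx.2.trans hb⟩)
  have hms : MeasurableSet (Set.Ioc a (a + δ)) := measurableSet_Ioc
  have hmuIs : muI (Set.Ioc a (a + δ)) = ENNReal.ofReal δ := by
    rw [muI, Measure.restrict_apply hms, Set.inter_eq_self_of_subset_left hssub01,
      Real.volume_Ioc]
    congr 1; ring
  have hμs : muI (Set.Ioc a (a + δ)) ≠ ∞ := by rw [hmuIs]; exact ENNReal.ofReal_ne_top
  set g : MeasureTheory.Lp ℝ 1 muI := indicatorConstLp 1 hms hμs c with hg
  have hgnorm : ‖g‖ = c * δ := by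
    rw [hg, norm_indicatorConstLp one_ne_zero ENNReal.one_ne_top, measureReal_def, hmuIs]
    simp [Real.norm_eq_abs, abs_of_pos hcpos, ENNReal.toReal_ofReal hδpos.le]
  have hgball : f + g ∈ Metric.ball f ε := by
    rw [Metric.mem_ball, dist_eq_norm, add_sub_cancel_left, hgnorm]
    have h1 : δ ≤ ε / (2 * c) := min_le_right _ _
    have h1' : δ * (2 * c) ≤ ε := (le_div_iff₀ (by positivity)).mp h1
    nlinarith [mul_pos hcpos hδpos]
  have hfgS : f + g ∈ SB a b n := hball hgball
  -- transfer a.e. equalities to the restricted measure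
  set ν := MeasureTheory.volume.restrict (Set.Icc a b) with hν
  have hsub01 : Set.Icc a b ⊆ Set.Icc 0 1 := fun x hx => ⟨ha.trans hx.1, hx.2.trans hb⟩
  have hadd : (((f + g) : MeasureTheory.Lp ℝ 1 muI) : ℝ → ℝ)
      =ᵐ[ν] (f : ℝ → ℝ) + (g : ℝ → ℝ) := ae_mono (nu_le_muI hsub01) (Lp.coeFn_add f g)
  have hind : (g : ℝ → ℝ) =ᵐ[ν] (Set.Ioc a (a + δ)).indicator fun _ => c :=
    ae_mono (nu_le_muI hsub01) indicatorConstLp_coeFn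
  have hnmem : ∀ᵐ x ∂ν, x ∉ Set.Ioc a (a + δ) := by
    filter_upwards [hfS, hfgS, hadd, hind] with x h1 h2 h3 h4 hxs
    rw [h3] at h2
    simp only [Pi.add_apply, h4, Set.indicator_of_mem hxs] at h2
    have h1' := abs_le.mp h1
    have h2' := abs_le.mp h2
    have hcn : c = 2 * n + 1 := hc
    linarith [h1'.1, h2'.2]
  have hz : ν (Set.Ioc a (a + δ)) = 0 := measure_eq_zero_iff_ae_notMem.2 hnmem
  rw [hν, Measure.restrict_apply hms, Set.inter_eq_self_of_subset_left hssub,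
    Real.volume_Ioc, ENNReal.ofReal_eq_zero] at hz
  linarith

lemma SB_meagre {a b : ℝ} (ha : 0 ≤ a) (hlt : a < b) (hb : b ≤ 1) (n : ℕ) :
    IsMeagre (SB a b n) := by
  have hsub : Set.Icc a b ⊆ Set.Icc 0 1 := fun x hx => ⟨ha.trans hx.1, hx.2.trans hb⟩
  have h1 : IsNowhereDense (SB a b n) :=
    (SB_closed hsub n).isNowhereDense_iff.mpr (SB_interior ha hlt hb n)
  rw [isMeagre_iff_countable_union_isNowhereDense]
  exact ⟨{SB a b n}, by simpa using h1, Set.countable_singleton _, by simp⟩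

noncomputable def TB (p : ℚ × ℚ × ℕ) : Set (MeasureTheory.Lp ℝ 1 muI) :=
  if 0 ≤ (p.1 : ℝ) ∧ (p.1 : ℝ) < (p.2.1 : ℝ) ∧ (p.2.1 : ℝ) ≤ 1 then
    SB (p.1 : ℝ) (p.2.1 : ℝ) p.2.2 else ∅

lemma TB_meagre (p : ℚ × ℚ × ℕ) : IsMeagre (TB p) := by
  rw [TB]
  split_ifs with h
  · exact SB_meagre h.1 h.2.1 h.2.2 _
  · exact IsMeagre.empty

/-- The set of nowhere essentially bounded functions is comeager (residual) in `L¹([0,1])`. -/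
theorem stmt6 :
    {f : MeasureTheory.Lp ℝ 1 muI | NowhereEssBdd (f : ℝ → ℝ)} ∈
      residual (MeasureTheory.Lp ℝ 1 muI) := by
  have hcover : {f : MeasureTheory.Lp ℝ 1 muI | NowhereEssBdd (f : ℝ → ℝ)}ᶜ ⊆
      ⋃ p : ℚ × ℚ × ℕ, TB p := by
    intro f hf
    simp only [Set.mem_compl_iff, Set.mem_setOf_eq, NowhereEssBdd] at hf
    push_neg at hf
    obtain ⟨a, b, ha, hab, hb, C, hC⟩ := hf
    obtain ⟨q1, hq1a, hq1b⟩ := exists_rat_btwn hab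
    obtain ⟨q2, hq21, hq2b⟩ := exists_rat_btwn hq1b
    obtain ⟨n, hn⟩ := exists_nat_ge C
    refine Set.mem_iUnion.2 ⟨(q1, q2, n), ?_⟩
    have hcond : 0 ≤ (q1 : ℝ) ∧ (q1 : ℝ) < (q2 : ℝ) ∧ (q2 : ℝ) ≤ 1 :=
      ⟨ha.trans hq1a.le, hq21, hq2b.le.trans hb⟩
    rw [TB, if_pos hcond]
    have hsub : Set.Icc (q1 : ℝ) (q2 : ℝ) ⊆ Set.Icc a b := fun x hx =>
      ⟨hq1a.le.trans hx.1, hx.2.trans hq2b.le⟩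
    have h2 : ∀ᵐ x ∂(MeasureTheory.volume.restrict (Set.Icc (q1:ℝ) (q2:ℝ))), |(f : ℝ → ℝ) x| ≤ C :=
      ae_mono (Measure.restrict_mono hsub le_rfl) hC
    exact h2.mono fun x hx => hx.trans hn
  have hmeagre : IsMeagre ({f : MeasureTheory.Lp ℝ 1 muI | NowhereEssBdd (f : ℝ → ℝ)}ᶜ) := by
    refine IsMeagre.mono hcover ?_
    have e : ℚ × ℚ × ℕ ≃ ℕ := Denumerable.eqv _
    have : (⋃ p : ℚ × ℚ × ℕ, TB p) = ⋃ k : ℕ, TB (e.symm k) := by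
      ext x; simp only [Set.mem_iUnion]
      constructor
      · rintro ⟨p, hp⟩; exact ⟨e p, by simpa using hp⟩
      · rintro ⟨k, hk⟩; exact ⟨e.symm k, hk⟩
    rw [this]
    exact isMeagre_iUnion fun k => TB_meagre _
  rw [IsMeagre, compl_compl] at hmeagre
  exact hmeagre
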